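/- Let N ∈ ℕ with N ≥ 2, and write ζ_2(a, w) = ∑_{0<m<n} m^{−a} n^{−w} (for a ∈ ℕ and Re w large enough that the series converges absolutely). Then, as s → 1 with Re s > 1, the function s ↦ (N−1)(s−1)·ζ_2(N, s) + s(s+1−N)·ζ_2(N−1, s+1) − s(s+1)·ζ_2(N−2, s+2) tends to the limit (N−1)·ζ(N) + (2−N)·ζ_2(N−1, 2) − 2·ζ_2(N−2, 3). (Proposition 5.6 together with the Arakawa–Kaneko expansion (5.14): in particular, lim_{s→1, Re s>1} (s−1)·ζ_2(N, s) = ζ(N), and the displayed limit is the value ζ_2^{des}(N, 1) of the desingularized double zeta-function.) -/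

import Mathlib

/-!
The terms `ζ₂(N-1, s+1)` and `ζ₂(N-2, s+2)` are continuous at `s = 1`: near any point with
`Re w > 1` and `Re (a + w) > 2` the series for `ζ₂(a, w)` is dominated by
`∑ m^{-r} (n-m)^{-r}` for some `r > 1`, so it converges uniformly there.

The singular term is handled by summing `ζ₂(N, s) = ∑_{m<n} m^{-N} n^{-s}` over `n` first:
`∑_{n>m} n^{-s} = ζ(s) - ∑_{i≤m} i^{-s}`, whence `ζ₂(N, s) + ζ₂⋆(s, N) = ζ(N) ζ(s)` with
`ζ₂⋆(s, N) = ∑_{i≤m} i^{-s} m^{-N}`. For `Re s ≥ 1` the inner sums are `O(√m)`, so `ζ₂⋆(s, N)` stays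
bounded, and `(s-1) ζ₂(N, s) = ζ(N) (s-1) ζ(s) + o(1) → ζ(N)` by the residue of `ζ` at `1`.
-/

open Complex Filter Topology

/-- The Euler–Zagier double zeta-function
`ζ₂(a, w) = ∑_{0 < m < n} m^{-a} n^{-w}` (as an absolutely convergent double
series, written with `m = p₁ + 1`, `n = p₁ + p₂ + 2`). -/
noncomputable def zeta2 (a w : ℂ) : ℂ :=
  ∑' p : ℕ × ℕ, ((p.1 : ℂ) + 1) ^ (-a) * ((p.1 : ℂ) + (p.2 : ℂ) + 2) ^ (-w)

lemma summable_nat_add_one_rpow_neg {r : ℝ} (hr : 1 < r) :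
    Summable fun n : ℕ => ((n : ℝ) + 1) ^ (-r) := by
  simpa using (summable_nat_add_iff 1).mpr (Real.summable_nat_rpow.mpr (neg_lt_neg hr))

lemma summable_rpow_neg_mul_rpow_neg {r : ℝ} (hr : 1 < r) :
    Summable fun p : ℕ × ℕ => ((p.1 : ℝ) + 1) ^ (-r) * ((p.2 : ℝ) + 1) ^ (-r) :=
  (summable_nat_add_one_rpow_neg hr).mul_of_nonneg (summable_nat_add_one_rpow_neg hr)
    (fun _ => by positivity) (fun _ => by positivity)

lemma norm_natCast_add_one_cpow (m : ℕ) (w : ℂ) :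
    ‖((m : ℂ) + 1) ^ w‖ = ((m : ℝ) + 1) ^ w.re := by
  simpa using norm_natCast_cpow_of_pos m.succ_pos w

lemma norm_natCast_add_natCast_add_two_cpow (m k : ℕ) (w : ℂ) :
    ‖((m : ℂ) + k + 2) ^ w‖ = ((m : ℝ) + k + 2) ^ w.re := by
  simpa [add_assoc] using norm_natCast_cpow_of_pos (m + k + 1).succ_pos w

noncomputable def zeta2Term (a w : ℂ) (p : ℕ × ℕ) : ℂ :=
  ((p.1 : ℂ) + 1) ^ (-a) * ((p.1 : ℂ) + (p.2 : ℂ) + 2) ^ (-w)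

lemma zeta2_eq_tsum_zeta2Term (a w : ℂ) : zeta2 a w = ∑' p, zeta2Term a w p := rfl

lemma norm_zeta2Term_le {a w : ℂ} {r : ℝ} (hr : 0 ≤ r) (hw : r ≤ w.re)
    (haw : 2 * r ≤ a.re + w.re) (p : ℕ × ℕ) :
    ‖zeta2Term a w p‖ ≤ ((p.1 : ℝ) + 1) ^ (-r) * ((p.2 : ℝ) + 1) ^ (-r) := by
  obtain ⟨i, j⟩ := p
  set m : ℝ := (i : ℝ) + 1
  set n : ℝ := (i : ℝ) + j + 2
  have hm : 1 ≤ m := by simp [m]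
  have hmn : m ≤ n := by simp only [m, n]; linarith [(j.cast_nonneg : (0 : ℝ) ≤ j)]
  have hjn : (j : ℝ) + 1 ≤ n := by simp only [n]; linarith [(i.cast_nonneg : (0 : ℝ) ≤ i)]
  rw [zeta2Term, norm_mul, norm_natCast_add_one_cpow, norm_natCast_add_natCast_add_two_cpow]
  simp only [neg_re]
  -- split `n ^ (-w.re)` as `n ^ (-(w.re - r)) * n ^ (-r)` and shrink `n` to `m`, resp. `j + 1`
  calc m ^ (-a.re) * n ^ (-w.re) = m ^ (-a.re) * n ^ (-(w.re - r)) * n ^ (-r) := by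
        rw [mul_assoc, ← Real.rpow_add (by linarith)]; ring_nf
    _ ≤ m ^ (-a.re) * m ^ (-(w.re - r)) * ((j : ℝ) + 1) ^ (-r) := by
        refine mul_le_mul (mul_le_mul_of_nonneg_left ?_ (by positivity)) ?_
          (by positivity) (by positivity)
        · exact Real.rpow_le_rpow_of_nonpos (by positivity) hmn (by linarith)
        · exact Real.rpow_le_rpow_of_nonpos (by positivity) hjn (by linarith)
    _ = m ^ (-(a.re + w.re - r)) * ((j : ℝ) + 1) ^ (-r) := by
        rw [← Real.rpow_add (by linarith)]; ring_nf
    _ ≤ m ^ (-r) * ((j : ℝ) + 1) ^ (-r) :=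
        mul_le_mul_of_nonneg_right (Real.rpow_le_rpow_of_exponent_le hm (by linarith))
          (by positivity)

lemma summable_zeta2Term {a w : ℂ} (ha : 1 < a.re) (hw : 1 < w.re) :
    Summable (zeta2Term a w) :=
  .of_norm_bounded (summable_rpow_neg_mul_rpow_neg (lt_min ha hw))
    (norm_zeta2Term_le (by positivity : (0 : ℝ) ≤ min a.re w.re) (min_le_right _ _)
      (by linarith [min_le_left a.re w.re, min_le_right a.re w.re]))

lemma continuousOn_zeta2 (a : ℂ) {r : ℝ} (hr : 1 < r) :
    ContinuousOn (zeta2 a) {w | r ≤ w.re ∧ 2 * r ≤ a.re + w.re} := by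
  refine continuousOn_tsum (fun p => ?_) (summable_rpow_neg_mul_rpow_neg hr)
    fun p _ hw => norm_zeta2Term_le (by positivity) hw.1 hw.2 p
  have hp : (p.1 : ℂ) + p.2 + 2 ≠ 0 := by exact_mod_cast (by omega : p.1 + p.2 + 2 ≠ 0)
  exact (continuous_const.mul (continuous_neg.const_cpow (Or.inl hp))).continuousOn

lemma continuousAt_zeta2 {a w : ℂ} (hw : 1 < w.re) (haw : 2 < a.re + w.re) :
    ContinuousAt (zeta2 a) w := by
  set r := min ((1 + w.re) / 2) ((2 + a.re + w.re) / 4)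
  have hr : 1 < r := lt_min (by linarith) (by linarith)
  have hr₁ : r < w.re := (min_le_left _ _).trans_lt (by linarith)
  have hr₂ : 2 * r < a.re + w.re :=
    (mul_le_mul_of_nonneg_left (min_le_right _ _) zero_le_two).trans_lt (by linarith)
  refine (continuousOn_zeta2 a hr).continuousAt (inter_mem ?_ ?_)
  · exact ((continuous_re.tendsto w).eventually_const_lt hr₁).mono fun _ h => h.le
  · exact (((continuous_const.add continuous_re).tendsto w).eventually_const_lt hr₂).mono
      fun _ h => h.le

lemma riemannZeta_eq_tsum {s : ℂ} (hs : 1 < s.re) :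
    riemannZeta s = ∑' n : ℕ, ((n : ℂ) + 1) ^ (-s) := by
  simp_rw [zeta_eq_tsum_one_div_nat_add_one_cpow hs, cpow_neg, one_div]

lemma summable_natCast_add_one_cpow_neg {s : ℂ} (hs : 1 < s.re) :
    Summable fun n : ℕ => ((n : ℂ) + 1) ^ (-s) :=
  .of_norm_bounded (summable_nat_add_one_rpow_neg hs)
    fun n => (norm_natCast_add_one_cpow n _).le

lemma tsum_natCast_add_two_cpow_neg {s : ℂ} (hs : 1 < s.re) (m : ℕ) :
    ∑' k : ℕ, ((m : ℂ) + k + 2) ^ (-s)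
      = riemannZeta s - ∑ i ∈ Finset.range (m + 1), ((i : ℂ) + 1) ^ (-s) := by
  rw [riemannZeta_eq_tsum hs,
    ← (summable_natCast_add_one_cpow_neg hs).sum_add_tsum_nat_add (m + 1), add_sub_cancel_left]
  refine tsum_congr fun k => ?_
  push_cast
  ring_nf

noncomputable def zeta2Star (w a : ℂ) : ℂ :=
  ∑' m : ℕ, (∑ i ∈ Finset.range (m + 1), ((i : ℂ) + 1) ^ (-w)) * ((m : ℂ) + 1) ^ (-a)

lemma zeta2_add_zeta2Star {a s : ℂ} (ha : 1 < a.re) (hs : 1 < s.re) :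
    zeta2 a s + zeta2Star s a = riemannZeta a * riemannZeta s := by
  have hsum := summable_zeta2Term ha hs
  have hfiber : ∀ m : ℕ, ∑' k : ℕ, zeta2Term a s (m, k) = ((m : ℂ) + 1) ^ (-a) *
      (riemannZeta s - ∑ i ∈ Finset.range (m + 1), ((i : ℂ) + 1) ^ (-s)) := by
    intro m
    rw [← tsum_natCast_add_two_cpow_neg hs, ← tsum_mul_left]
    rfl
  have hζa : Summable fun m : ℕ => ((m : ℂ) + 1) ^ (-a) * riemannZeta s :=
    (summable_natCast_add_one_cpow_neg ha).mul_right _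
  rw [zeta2_eq_tsum_zeta2Term, hsum.tsum_prod, zeta2Star, riemannZeta_eq_tsum ha,
    ← tsum_mul_right, ← hsum.prod.tsum_add ?_]
  · refine tsum_congr fun m => ?_
    rw [hfiber]
    ring
  · refine (hζa.sub (hsum.prod.congr hfiber)).congr fun m => ?_
    ring

lemma norm_sum_range_cpow_neg_le {s : ℂ} (hs : 1 ≤ s.re) (m : ℕ) :
    ‖∑ i ∈ Finset.range (m + 1), ((i : ℂ) + 1) ^ (-s)‖
      ≤ (∑' i : ℕ, ((i : ℝ) + 1) ^ (-(3 / 2 : ℝ))) * ((m : ℝ) + 1) ^ (1 / 2 : ℝ) := by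
  have hterm : ∀ i ∈ Finset.range (m + 1),
      ‖((i : ℂ) + 1) ^ (-s)‖
        ≤ ((i : ℝ) + 1) ^ (-(3 / 2 : ℝ)) * ((m : ℝ) + 1) ^ (1 / 2 : ℝ) := by
    intro i hi
    have hi1 : (1 : ℝ) ≤ (i : ℝ) + 1 := by simp
    have him : (i : ℝ) + 1 ≤ (m : ℝ) + 1 := by
      gcongr; exact_mod_cast Nat.lt_succ_iff.mp (Finset.mem_range.mp hi)
    calc ‖((i : ℂ) + 1) ^ (-s)‖ = ((i : ℝ) + 1) ^ (-s.re) := by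
          rw [norm_natCast_add_one_cpow, neg_re]
      _ ≤ ((i : ℝ) + 1) ^ (-(3 / 2 : ℝ) + 1 / 2) :=
          Real.rpow_le_rpow_of_exponent_le hi1 (by linarith)
      _ ≤ ((i : ℝ) + 1) ^ (-(3 / 2 : ℝ)) * ((m : ℝ) + 1) ^ (1 / 2 : ℝ) := by
          rw [Real.rpow_add (by positivity)]
          gcongr
  calc ‖∑ i ∈ Finset.range (m + 1), ((i : ℂ) + 1) ^ (-s)‖
      ≤ ∑ i ∈ Finset.range (m + 1),
          ((i : ℝ) + 1) ^ (-(3 / 2 : ℝ)) * ((m : ℝ) + 1) ^ (1 / 2 : ℝ) :=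
        (norm_sum_le _ _).trans (Finset.sum_le_sum hterm)
    _ ≤ (∑' i : ℕ, ((i : ℝ) + 1) ^ (-(3 / 2 : ℝ))) * ((m : ℝ) + 1) ^ (1 / 2 : ℝ) := by
        rw [← Finset.sum_mul]
        gcongr
        exact (summable_nat_add_one_rpow_neg (by norm_num)).sum_le_tsum _
          fun _ _ => by positivity

lemma exists_norm_zeta2Star_le {a : ℂ} (ha : 3 / 2 < a.re) :
    ∃ C, ∀ w : ℂ, 1 ≤ w.re → ‖zeta2Star w a‖ ≤ C := by
  set Z := ∑' i : ℕ, ((i : ℝ) + 1) ^ (-(3 / 2 : ℝ))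
  refine ⟨∑' m : ℕ, Z * ((m : ℝ) + 1) ^ (-(a.re - 1 / 2)), fun w hw => ?_⟩
  refine tsum_of_norm_bounded
    ((summable_nat_add_one_rpow_neg (by linarith : 1 < a.re - 1 / 2)).mul_left Z).hasSum
    fun m => ?_
  rw [norm_mul, norm_natCast_add_one_cpow, neg_re]
  calc ‖∑ i ∈ Finset.range (m + 1), ((i : ℂ) + 1) ^ (-w)‖ * ((m : ℝ) + 1) ^ (-a.re)
      ≤ Z * ((m : ℝ) + 1) ^ (1 / 2 : ℝ) * ((m : ℝ) + 1) ^ (-a.re) := by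
        gcongr
        exact norm_sum_range_cpow_neg_le hw m
    _ = Z * ((m : ℝ) + 1) ^ (-(a.re - 1 / 2)) := by
        rw [mul_assoc, ← Real.rpow_add (by positivity)]
        ring_nf

lemma tendsto_sub_one_mul_zeta2 {a : ℂ} (ha : 3 / 2 < a.re) :
    Tendsto (fun s => (s - 1) * zeta2 a s) (𝓝[{s | 1 < s.re}] 1) (𝓝 (riemannZeta a)) := by
  obtain ⟨C, hC⟩ := exists_norm_zeta2Star_le ha
  have hres : Tendsto (fun s => (s - 1) * riemannZeta s) (𝓝[{s | 1 < s.re}] 1) (𝓝 1) :=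
    riemannZeta_residue_one.mono_left <| nhdsWithin_mono _
      fun s (hs : 1 < s.re) (h1 : s = 1) => by simp [h1] at hs
  have hstar : Tendsto (fun s => (s - 1) * zeta2Star s a) (𝓝[{s | 1 < s.re}] 1) (𝓝 0) :=
    (tendsto_sub_nhds_zero_iff.mpr (tendsto_nhdsWithin_of_tendsto_nhds tendsto_id))
      |>.zero_mul_isBoundedUnder_le
        ⟨C, eventually_map.mpr (eventually_mem_nhdsWithin.mono fun s hs => hC s hs.le)⟩
  have hlim := (hres.mul_const (riemannZeta a)).sub hstar
  rw [one_mul, sub_zero] at hlim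
  refine hlim.congr' (eventually_mem_nhdsWithin.mono fun s hs => ?_)
  linear_combination (1 - s) * zeta2_add_zeta2Star (by linarith) hs

/-- Proposition 5.6 together with the Arakawa–Kaneko expansion (5.14): for an
integer `N ≥ 2`, as `s → 1` with `Re s > 1`,
`(N-1)(s-1) ζ₂(N, s) + s(s+1-N) ζ₂(N-1, s+1) - s(s+1) ζ₂(N-2, s+2)` tends to
`(N-1) ζ(N) + (2-N) ζ₂(N-1, 2) - 2 ζ₂(N-2, 3)` (the value `ζ₂^{des}(N, 1)`). -/
theorem zeta2des_nat_one (N : ℕ) (hN : 2 ≤ N) :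
    Tendsto
      (fun s : ℂ =>
        ((N : ℂ) - 1) * (s - 1) * zeta2 (N : ℂ) s
          + s * (s + 1 - N) * zeta2 ((N : ℂ) - 1) (s + 1)
          - s * (s + 1) * zeta2 ((N : ℂ) - 2) (s + 2))
      (𝓝[{s : ℂ | 1 < s.re}] 1)
      (𝓝 (((N : ℂ) - 1) * riemannZeta (N : ℂ)
        + (2 - (N : ℂ)) * zeta2 ((N : ℂ) - 1) 2
        - 2 * zeta2 ((N : ℂ) - 2) 3)) := by
  have hN' : (2 : ℝ) ≤ N := by exact_mod_cast hN
  have hpole := (tendsto_sub_one_mul_zeta2 (a := N) (by simp; linarith)).const_mul ((N : ℂ) - 1)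
  have h₂ : ContinuousAt (zeta2 ((N : ℂ) - 1)) (1 + 1) :=
    continuousAt_zeta2 (by norm_num) (by simp; linarith)
  have h₃ : ContinuousAt (zeta2 ((N : ℂ) - 2)) (1 + 2) :=
    continuousAt_zeta2 (by norm_num) (by simp; linarith)
  have hreg : ContinuousAt (fun s : ℂ => s * (s + 1 - N) * zeta2 ((N : ℂ) - 1) (s + 1)
      - s * (s + 1) * zeta2 ((N : ℂ) - 2) (s + 2)) 1 := by
    fun_prop (disch := assumption)
  convert hpole.add (hreg.tendsto.mono_left nhdsWithin_le_nhds) using 2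
  · ring
  · norm_num [add_sub_assoc]
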